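/- Let F be a field and O the split octonion algebra over F. For every g ∈ SL₃(F), the map ρ(g) : O → O defined by (α, u, v, β) ↦ (α, u g, v (g⁻¹)ᵀ, β), where u, v ∈ F³ are regarded as row vectors, is an F-algebra automorphism of O, i.e. an F-linear bijection satisfying ρ(g)(a a') = ρ(g)(a) ρ(g)(a') for all a, a' ∈ O. -/

import Mathlib

namespace OctoPaper

variable (F : Type*) [Field F]

/-- The split (Zorn matrix) octonion algebra over `F`. -/
structure Octo where
  x1 : F
  u : Fin 3 → F
  v : Fin 3 → F
  x8 : F

variable {F}

/-- Dot product on `F³`. -/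
def dot (u v : Fin 3 → F) : F := u 0 * v 0 + u 1 * v 1 + u 2 * v 2

/-- Cross product on `F³`. -/
def cross (u v : Fin 3 → F) : Fin 3 → F :=
  ![u 1 * v 2 - u 2 * v 1, u 2 * v 0 - u 0 * v 2, u 0 * v 1 - u 1 * v 0]

instance : Mul (Octo F) where
  mul x y :=
    ⟨x.x1 * y.x1 + dot x.u y.v,
     fun i => x.x1 * y.u i + y.x8 * x.u i - cross x.v y.v i,
     fun i => y.x1 * x.v i + x.x8 * y.v i + cross x.u y.u i,
     x.x8 * y.x8 + dot x.v y.u⟩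

instance : Add (Octo F) where add x y := ⟨x.x1 + y.x1, x.u + y.u, x.v + y.v, x.x8 + y.x8⟩
instance : Neg (Octo F) where neg x := ⟨-x.x1, -x.u, -x.v, -x.x8⟩
instance : Sub (Octo F) where sub x y := x + -y
instance : SMul F (Octo F) where smul c x := ⟨c * x.x1, c • x.u, c • x.v, c * x.x8⟩
instance : One (Octo F) where one := ⟨1, 0, 0, 1⟩
instance : Zero (Octo F) where zero := ⟨0, 0, 0, 0⟩

/-- Trace of an octonion. -/
def tr (x : Octo F) : F := x.x1 + x.x8

/-- Norm of an octonion. -/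
def onorm (x : Octo F) : F := x.x1 * x.x8 - dot x.u x.v

/-- Conjugate of an octonion. -/
def conj (x : Octo F) : Octo F := ⟨x.x8, -x.u, -x.v, x.x1⟩

/-- `g` is an `F`-algebra automorphism of the split octonion algebra:
an `F`-linear bijection preserving multiplication. -/
def IsAut (g : Octo F → Octo F) : Prop :=
  Function.Bijective g ∧
  (∀ x y : Octo F, g (x + y) = g x + g y) ∧
  (∀ (c : F) (x : Octo F), g (c • x) = c • g x) ∧
  (∀ x y : Octo F, g (x * y) = g x * g y)

/-- The automorphism `ρ(g)` of `O` attached to `g ∈ SL₃(F)`. -/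
def rho (g : Matrix.SpecialLinearGroup (Fin 3) F) (x : Octo F) : Octo F :=
  ⟨x.x1, Matrix.vecMul x.u (g : Matrix (Fin 3) (Fin 3) F),
   Matrix.vecMul x.v (Matrix.transpose (↑(g⁻¹) : Matrix (Fin 3) (Fin 3) F)), x.x8⟩

/-- The automorphism `ℏ` of `O`. -/
def hbar (x : Octo F) : Octo F := ⟨x.x8, -x.v, -x.u, x.x1⟩

/-- The automorphism `δ₁(u)` of `O`. -/
def delta1 (w : Fin 3 → F) (y : Octo F) : Octo F :=
  ⟨y.x1 - dot w y.v,
   fun i => (y.x1 - y.x8 - dot w y.v) * w i + y.u i,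
   fun i => y.v i - cross y.u w i,
   y.x8 + dot w y.v⟩

/-- The automorphism `δ₂(v)` of `O`. -/
def delta2 (w : Fin 3 → F) (y : Octo F) : Octo F :=
  ⟨y.x1 + dot y.u w,
   fun i => y.u i + cross y.v w i,
   fun i => (-y.x1 + y.x8 - dot y.u w) * w i + y.v i,
   y.x8 - dot y.u w⟩

end OctoPaper

open OctoPaper

open Matrix OctoPaper

section Aux
variable {F : Type*} [Field F]

lemma cross_vecMul (M : Matrix (Fin 3) (Fin 3) F) (a b : Fin 3 → F) :
    cross (vecMul a M) (vecMul b M) = vecMul (cross a b) M.adjugateᵀ := by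
  funext i
  fin_cases i <;>
    simp [cross, vecMul, dotProduct, Fin.sum_univ_three, Matrix.adjugate_fin_three,
      Matrix.cons_val_zero, Matrix.cons_val_one] <;> ring

lemma dot_key (M : Matrix (Fin 3) (Fin 3) F) (hdet : M.det = 1) (a b : Fin 3 → F) :
    dot (vecMul a M) (vecMul b M.adjugateᵀ) = dot a b := by
  rw [Matrix.det_fin_three] at hdet
  simp only [dot, vecMul, dotProduct, Fin.sum_univ_three, Matrix.adjugate_fin_three,
    Matrix.transpose_apply]
  norm_num [Matrix.cons_val', Matrix.cons_val_zero, Matrix.cons_val_one, Matrix.head_cons,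
    Matrix.empty_val', Matrix.cons_val_fin_one, Matrix.head_fin_const, Matrix.cons_val_two,
    Matrix.tail_cons]
  linear_combination (a 0 * b 0 + a 1 * b 1 + a 2 * b 2) * hdet

lemma adj_adj (M : Matrix (Fin 3) (Fin 3) F) (hdet : M.det = 1) :
    (M.adjugateᵀ).adjugateᵀ = M := by
  rw [← Matrix.adjugate_transpose, Matrix.adjugate_adjugate', Matrix.transpose_transpose, hdet]
  simp

lemma cross_vecMul_adj (M : Matrix (Fin 3) (Fin 3) F) (hdet : M.det = 1) (a b : Fin 3 → F) :
    cross (vecMul a M.adjugateᵀ) (vecMul b M.adjugateᵀ) = vecMul (cross a b) M := by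
  rw [cross_vecMul, adj_adj M hdet]

lemma dot_key' (M : Matrix (Fin 3) (Fin 3) F) (hdet : M.det = 1) (a b : Fin 3 → F) :
    dot (vecMul a M.adjugateᵀ) (vecMul b M) = dot a b := by
  have h2 : M.adjugateᵀ.det = 1 := by
    rw [Matrix.det_transpose, Matrix.det_adjugate, hdet]; simp
  have := dot_key M.adjugateᵀ h2 a b
  rwa [adj_adj M hdet] at this

section
variable {F : Type*} [Field F]
set_option linter.unusedSectionVars false in
lemma octo_ext {z w : Octo F} (h1 : z.x1 = w.x1) (h2 : ∀ i, z.u i = w.u i)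
    (h3 : ∀ i, z.v i = w.v i) (h4 : z.x8 = w.x8) : z = w := by
  cases z; cases w
  simp only [Octo.mk.injEq]
  exact ⟨h1, funext h2, funext h3, h4⟩
lemma add_x1 (x y : Octo F) : (x + y).x1 = x.x1 + y.x1 := rfl
lemma add_u (x y : Octo F) (i : Fin 3) : (x + y).u i = x.u i + y.u i := rfl
lemma add_v (x y : Octo F) (i : Fin 3) : (x + y).v i = x.v i + y.v i := rfl
lemma add_x8 (x y : Octo F) : (x + y).x8 = x.x8 + y.x8 := rfl
lemma smul_x1 (c : F) (x : Octo F) : (c • x).x1 = c * x.x1 := rfl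
lemma smul_u (c : F) (x : Octo F) (i : Fin 3) : (c • x).u i = c * x.u i := rfl
lemma smul_v (c : F) (x : Octo F) (i : Fin 3) : (c • x).v i = c * x.v i := rfl
lemma smul_x8 (c : F) (x : Octo F) : (c • x).x8 = c * x.x8 := rfl
lemma mul_x1 (x y : Octo F) : (x * y).x1 = x.x1 * y.x1 + dot x.u y.v := rfl
lemma mul_u (x y : Octo F) (i : Fin 3) :
    (x * y).u i = x.x1 * y.u i + y.x8 * x.u i - cross x.v y.v i := rfl
lemma mul_v (x y : Octo F) (i : Fin 3) :
    (x * y).v i = y.x1 * x.v i + x.x8 * y.v i + cross x.u y.u i := rfl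
lemma mul_x8 (x y : Octo F) : (x * y).x8 = x.x8 * y.x8 + dot x.v y.u := rfl
end

lemma octo_mk_eq {F : Type*} [Field F] {a a' d d' : F} {b b' c c' : Fin 3 → F}
    (h1 : a = a') (h2 : b = b') (h3 : c = c') (h4 : d = d') :
    (Octo.mk a b c d : Octo F) = Octo.mk a' b' c' d' := by
  subst h1 h2 h3 h4; rfl

end Aux

/-- For every `g ∈ SL₃(F)` the map `ρ(g)` is an `F`-algebra automorphism of the
split octonions. -/
theorem rho_isAut (F : Type*) [Field F] (g : Matrix.SpecialLinearGroup (Fin 3) F) :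
    IsAut (rho g : Octo F → Octo F) := by
  have hA : (↑(g⁻¹) : Matrix (Fin 3) (Fin 3) F) = Matrix.adjugate (↑g) :=
    Matrix.SpecialLinearGroup.coe_inv g
  have hdet : (↑g : Matrix (Fin 3) (Fin 3) F).det = 1 := g.2
  set M : Matrix (Fin 3) (Fin 3) F := ↑g with hM
  have hMinv : M * M.adjugate = 1 := by
    rw [Matrix.mul_adjugate, hdet, one_smul]
  have hinvM : M.adjugate * M = 1 := by
    rw [Matrix.adjugate_mul, hdet, one_smul]
  refine ⟨?_, ?_, ?_, ?_⟩
  · -- bijective: explicit inverse rho g⁻¹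
    have hinv2 : (↑(g⁻¹)⁻¹ : Matrix (Fin 3) (Fin 3) F) = M := by rw [inv_inv]
    refine Function.bijective_iff_has_inverse.2 ⟨rho g⁻¹, fun x => ?_, fun x => ?_⟩ <;>
    · simp only [rho, hA, hinv2, Matrix.vecMul_vecMul, ← Matrix.transpose_mul]
      cases x
      simp [hMinv, hinvM, ← hM]
  · intro x y
    refine octo_ext ?_ (fun i => ?_) (fun i => ?_) ?_ <;>
      simp only [rho, add_x1, add_x8, Matrix.vecMul, dotProduct, Fin.sum_univ_three,
        add_u, add_v] <;> ring
  · intro c x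
    refine octo_ext ?_ (fun i => ?_) (fun i => ?_) ?_ <;>
      simp only [rho, smul_x1, smul_x8, Matrix.vecMul, dotProduct, Fin.sum_univ_three,
        smul_u, smul_v] <;> ring
  · intro x y
    refine octo_ext ?_ (fun i => ?_) (fun i => ?_) ?_
    · show (x * y).x1 = (rho g x * rho g y).x1
      simp only [rho, mul_x1, hA]
      rw [dot_key M hdet]
    · show (rho g (x * y)).u i = (rho g x * rho g y).u i
      have hc := congrFun (cross_vecMul_adj M hdet x.v y.v) i
      revert hc
      fin_cases i <;>
      · intro hc
        simp only [rho, hA, mul_u, Matrix.vecMul, dotProduct, Fin.sum_univ_three, cross,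
          Matrix.cons_val_zero, Matrix.cons_val_one, Matrix.head_cons, Matrix.cons_val_two,
          Matrix.tail_cons, Fin.isValue, Fin.zero_eta, Fin.mk_one, Fin.reduceFinMk, ← hM] at hc ⊢
        linear_combination hc
    · show (rho g (x * y)).v i = (rho g x * rho g y).v i
      have hc := congrFun (cross_vecMul M x.u y.u) i
      revert hc
      fin_cases i <;>
      · intro hc
        simp only [rho, hA, mul_v, Matrix.vecMul, dotProduct, Fin.sum_univ_three, cross,
          Matrix.cons_val_zero, Matrix.cons_val_one, Matrix.head_cons, Matrix.cons_val_two,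
          Matrix.tail_cons, Fin.isValue, Fin.zero_eta, Fin.mk_one, Fin.reduceFinMk, ← hM] at hc ⊢
        linear_combination -hc
    · show (x * y).x8 = (rho g x * rho g y).x8
      simp only [rho, mul_x8, hA]
      rw [dot_key' M hdet]
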